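/- In LJF, the sequent ↓∀x. ↑!A⁻(x) ⊢ ↑!∀u. A⁻(u) is not derivable. -/

import Mathlib

set_option autoImplicit true

mutual
/-- Negative formulas of focused polarised intuitionistic linear logic LJF,
over term domain `ℕ`; atoms are `natom p args` for predicate symbol `p`. -/
inductive NegF : Type
  | natom : ℕ → List ℕ → NegF
  | lolli : PosF → NegF → NegF
  | all : (ℕ → NegF) → NegF
  | up : PosF → NegF
/-- Positive formulas of LJF. -/
inductive PosF : Type
  | patom : ℕ → List ℕ → PosF
  | tensor : PosF → PosF → PosF
  | bang : NegF → PosF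
  | ex : (ℕ → PosF) → PosF
  | down : NegF → PosF
end

/-- The three judgment forms of LJF: inversion `Γ; Δ ⊢ N`,
left focus `Γ; Δ, [N] ⊢ N'` and right focus `Γ; Δ ⊢ [P]`. -/
inductive LFoc : Type
  | inv : NegF → LFoc
  | left : NegF → NegF → LFoc
  | right : PosF → LFoc

/-- Derivability in LJF (Liang–Miller rules): `LJF Γ Δ J`, with
unrestricted context `Γ` of negative formulas and linear context `Δ`
of positive formulas. -/
inductive LJF : List NegF → Multiset PosF → LFoc → Prop
  | axNeg : LJF Γ 0 (.left (.natom p ts) (.natom p ts))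
  | axPos : LJF Γ {.patom p ts} (.right (.patom p ts))
  | allL : LJF Γ Δ (.left (N t) C) → LJF Γ Δ (.left (.all N) C)
  | allR : (∀ t, LJF Γ Δ (.inv (N t))) → LJF Γ Δ (.inv (.all N))
  | exL : (∀ t, LJF Γ (P t ::ₘ Δ) (.inv C)) → LJF Γ (PosF.ex P ::ₘ Δ) (.inv C)
  | exR : LJF Γ Δ (.right (P t)) → LJF Γ Δ (.right (.ex P))
  | lolliL : LJF Γ Δ₁ (.right P) → LJF Γ Δ₂ (.left N C) →
      LJF Γ (Δ₁ + Δ₂) (.left (.lolli P N) C)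
  | lolliR : LJF Γ (P ::ₘ Δ) (.inv N) → LJF Γ Δ (.inv (.lolli P N))
  | tensorL : LJF Γ (P₁ ::ₘ P₂ ::ₘ Δ) (.inv C) →
      LJF Γ (PosF.tensor P₁ P₂ ::ₘ Δ) (.inv C)
  | tensorR : LJF Γ Δ₁ (.right P₁) → LJF Γ Δ₂ (.right P₂) →
      LJF Γ (Δ₁ + Δ₂) (.right (.tensor P₁ P₂))
  | bangL : LJF (N :: Γ) Δ (.inv C) → LJF Γ (PosF.bang N ::ₘ Δ) (.inv C)
  | bangR : LJF Γ 0 (.inv N) → LJF Γ 0 (.right (.bang N))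
  | copy : N ∈ Γ → LJF Γ Δ (.left N C) → LJF Γ Δ (.inv C)
  | focusL : LJF Γ Δ (.left N C) → LJF Γ (PosF.down N ::ₘ Δ) (.inv C)
  | focusR : LJF Γ Δ (.right P) → LJF Γ Δ (.inv (.up P))
  | blurL : LJF Γ (P ::ₘ Δ) (.inv C) → LJF Γ Δ (.left (.up P) C)
  | blurR : LJF Γ Δ (.inv N) → LJF Γ Δ (.right (.down N))

/-!
Focusing forces the derivation: `!` on the right needs an empty linear context, so `↓∀x. ↑!A⁻(x)`
must first be focused on, which instantiates `x` to some `t` and leaves the hypothesis `!A⁻(t)`,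
i.e. the unrestricted atom `A⁻(t)`. Now `∀u. A⁻(u)` must be proved for every `u`, in particular
for `u = t + 1`, and the only focus available, on `A⁻(t)`, closes nothing but `A⁻(t)` itself.
-/

namespace LJF

theorem eq_of_left_natom {Γ : List NegF} {Δ : Multiset PosF} {p : ℕ} {ts : List ℕ} {C : NegF}
    (h : LJF Γ Δ (.left (.natom p ts) C)) :
    C = .natom p ts ∧ Δ = 0 := by
  cases h
  exact ⟨rfl, rfl⟩

theorem inv_of_right_bang {Γ : List NegF} {Δ : Multiset PosF} {N : NegF}
    (h : LJF Γ Δ (.right (.bang N))) :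
    Δ = 0 ∧ LJF Γ 0 (.inv N) := by
  cases h with
  | bangR h => exact ⟨rfl, h⟩

theorem exists_of_left_all_up {Γ : List NegF} {Δ : Multiset PosF} {P : ℕ → PosF} {C : NegF}
    (h : LJF Γ Δ (.left (.all fun x => .up (P x)) C)) :
    ∃ t, LJF Γ (P t ::ₘ Δ) (.inv C) := by
  cases h with
  | allL h =>
    cases h with
    | blurL h => exact ⟨_, h⟩

section AtomicContext

variable {Γ : List NegF} (hΓ : ∀ N ∈ Γ, ∃ p ts, N = .natom p ts)
include hΓ

theorem eq_natom_of_copy {N C : NegF} (hN : N ∈ Γ) (h : LJF Γ 0 (.left N C)) :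
    C = N := by
  obtain ⟨p, ts, rfl⟩ := hΓ N hN
  exact h.eq_of_left_natom.1

theorem mem_of_inv_natom {p : ℕ} {ts : List ℕ} (h : LJF Γ 0 (.inv (.natom p ts))) :
    .natom p ts ∈ Γ := by
  generalize hΔ : (0 : Multiset PosF) = Δ at h
  cases h with
  | copy hN h =>
    subst hΔ
    rwa [← eq_natom_of_copy hΓ hN h] at hN
  | exL _ | tensorL _ | bangL _ | focusL _ => exact (Multiset.cons_ne_zero hΔ.symm).elim

theorem inv_of_inv_all {N : ℕ → NegF} (h : LJF Γ 0 (.inv (.all N))) (t : ℕ) :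
    LJF Γ 0 (.inv (N t)) := by
  generalize hΔ : (0 : Multiset PosF) = Δ at h
  cases h with
  | allR h => subst hΔ; exact h t
  | copy hN h =>
    subst hΔ
    cases eq_natom_of_copy hΓ hN h
    obtain ⟨_, _, ⟨⟩⟩ := hΓ _ hN
  | exL _ | tensorL _ | bangL _ | focusL _ => exact (Multiset.cons_ne_zero hΔ.symm).elim

theorem right_of_inv_up {P : PosF} (h : LJF Γ 0 (.inv (.up P))) : LJF Γ 0 (.right P) := by
  generalize hΔ : (0 : Multiset PosF) = Δ at h
  cases h with
  | focusR h => subst hΔ; exact h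
  | copy hN h =>
    subst hΔ
    cases eq_natom_of_copy hΓ hN h
    obtain ⟨_, _, ⟨⟩⟩ := hΓ _ hN
  | exL _ | tensorL _ | bangL _ | focusL _ => exact (Multiset.cons_ne_zero hΔ.symm).elim

end AtomicContext

theorem left_of_inv_up_bang_down {M N : NegF} (h : LJF [] {.down M} (.inv (.up (.bang N)))) :
    LJF [] 0 (.left M (.up (.bang N))) := by
  generalize hΔ : ({.down M} : Multiset PosF) = Δ at h
  cases h with
  | focusR h => cases (Multiset.singleton_ne_zero _) (hΔ.trans h.inv_of_right_bang.1)
  | copy hN _ => cases hN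
  | focusL h =>
    obtain ⟨⟨⟩, rfl⟩ := (Multiset.singleton_eq_cons_iff _).mp hΔ
    exact h
  | exL _ | tensorL _ | bangL _ => cases ((Multiset.singleton_eq_cons_iff _).mp hΔ).1

theorem inv_of_inv_up_bang_bang {M N : NegF} (h : LJF [] {.bang M} (.inv (.up (.bang N)))) :
    LJF [M] 0 (.inv (.up (.bang N))) := by
  generalize hΔ : ({.bang M} : Multiset PosF) = Δ at h
  cases h with
  | focusR h => cases (Multiset.singleton_ne_zero _) (hΔ.trans h.inv_of_right_bang.1)
  | copy hN _ => cases hN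
  | bangL h =>
    obtain ⟨⟨⟩, rfl⟩ := (Multiset.singleton_eq_cons_iff _).mp hΔ
    exact h
  | exL _ | tensorL _ | focusL _ => cases ((Multiset.singleton_eq_cons_iff _).mp hΔ).1

end LJF

/-- The sequent `↓∀x. ↑!A⁻(x) ⊢ ↑!∀u. A⁻(u)` is not derivable in LJF
(with the unary negative atom `A⁻ = natom 0`). -/
theorem stmt5 :
    ¬ LJF []
        {PosF.down (.all fun x => .up (.bang (.natom 0 [x])))}
        (.inv (.up (.bang (.all fun u => .natom 0 [u])))) := by
  intro h
  obtain ⟨t, ht⟩ := h.left_of_inv_up_bang_down.exists_of_left_all_up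
  have hΓ : ∀ N ∈ [NegF.natom 0 [t]], ∃ p ts, N = .natom p ts := by simp
  have hG := ((LJF.inv_of_inv_up_bang_bang ht).right_of_inv_up hΓ).inv_of_right_bang.2
  simpa using (hG.inv_of_inv_all hΓ (t + 1)).mem_of_inv_natom hΓ
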